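/- Let n = p_1 p_2 p_3, where p_1 < p_2 < p_3 are primes. Then the independence number of the prime-coprime graph of the cyclic group Z_n equals p_1 (p_2 − 1)(p_3 − 1). -/

import Mathlib

/-- The prime-coprime graph: distinct vertices `g, h` are adjacent iff
`gcd (orderOf g) (orderOf h)` is `1` or a prime. -/
def primeCoprimeGraph (G : Type*) [Monoid G] : SimpleGraph G where
  Adj g h := g ≠ h ∧
    (Nat.gcd (orderOf g) (orderOf h) = 1 ∨ (Nat.gcd (orderOf g) (orderOf h)).Prime)
  symm := by
    constructor
    rintro g h ⟨hne, hd⟩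
    exact ⟨hne.symm, by rwa [Nat.gcd_comm]⟩
  loopless := by constructor; rintro g ⟨hne, -⟩; exact hne rfl

/-- A set of vertices is independent if no two of its elements are adjacent. -/
def IsIndepSet {V : Type*} (Γ : SimpleGraph V) (s : Set V) : Prop :=
  s.Pairwise fun a b => ¬ Γ.Adj a b

open scoped Classical in
/-- The independence number of a graph on a finite vertex set. -/
noncomputable def indepNum {V : Type*} [Fintype V] (Γ : SimpleGraph V) : ℕ :=
  Finset.univ.sup fun s : Finset V => if IsIndepSet Γ (s : Set V) then s.card else 0

/-- A graph is split if its vertex set can be partitioned into two disjoint nonempty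
subsets, one a clique and the other an independent set. -/
def IsSplit {V : Type*} (Γ : SimpleGraph V) : Prop :=
  ∃ K I : Set V, K.Nonempty ∧ I.Nonempty ∧ Disjoint K I ∧ K ∪ I = Set.univ ∧
    Γ.IsClique K ∧ IsIndepSet Γ I

/-!
Write Ω for the number of prime factors counted with multiplicity. Distinct elements g, h are
non-adjacent in Θ(G) exactly when Ω(gcd(|g|, |h|)) ≥ 2. If Ω(|G|) = 3, every proper divisor of |G|
has Ω ≤ 2, and a divisor c of a with Ω(c) ≥ Ω(a) equals a; so two non-adjacent elements of
non-generating orders have the same order d, and Ω(d) = 2. An independent set with two or more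
elements therefore consists of generators and elements of one order d, at most φ(n) + φ(d) of
them in a cyclic group of order n, and these sets are independent. For squarefree n,
φ(n / q) (q - 1) = φ(n) for every prime q ∣ n, so φ(d) is largest for d = n / p₁, and
φ(p₁p₂p₃) + φ(p₂p₃) = p₁ (p₂ - 1) (p₃ - 1).
-/

open scoped ArithmeticFunction.Omega Nat

namespace ArithmeticFunction

lemma cardFactors_add_cardFactors_div {a n : ℕ} (hn : n ≠ 0) (h : a ∣ n) :
    Ω a + Ω (n / a) = Ω n := by
  obtain ⟨k, rfl⟩ := h
  have ⟨ha, hk⟩ := mul_ne_zero_iff.1 hn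
  rw [Nat.mul_div_cancel_left k (Nat.pos_of_ne_zero ha), cardFactors_mul ha hk]

lemma cardFactors_lt_of_dvd_of_ne {a n : ℕ} (hn : n ≠ 0) (h : a ∣ n) (hne : a ≠ n) :
    Ω a < Ω n := by
  rw [← cardFactors_add_cardFactors_div hn h, Nat.lt_add_right_iff_pos,
    cardFactors_pos_iff_one_lt]
  obtain ⟨k, rfl⟩ := h
  have ⟨ha, hk⟩ := mul_ne_zero_iff.1 hn
  rw [Nat.mul_div_cancel_left k (Nat.pos_of_ne_zero ha)]
  exact Nat.one_lt_iff_ne_zero_and_ne_one.2 ⟨hk, fun h => hne (by rw [h, mul_one])⟩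

lemma eq_of_dvd_of_cardFactors_le {a n : ℕ} (hn : n ≠ 0) (h : a ∣ n) (hle : Ω n ≤ Ω a) :
    a = n :=
  by_contra fun hne => (cardFactors_lt_of_dvd_of_ne hn h hne).not_ge hle

lemma cardFactors_le_of_dvd {a n : ℕ} (hn : n ≠ 0) (h : a ∣ n) : Ω a ≤ Ω n :=
  (cardFactors_add_cardFactors_div hn h).le.trans' (Nat.le_add_right _ _)

lemma cardFactors_le_one_iff {d : ℕ} (hd : d ≠ 0) : Ω d ≤ 1 ↔ d = 1 ∨ d.Prime := by
  rw [← cardFactors_eq_one_iff_prime, Nat.le_one_iff_eq_zero_or_eq_one,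
    cardFactors_eq_zero_iff_eq_zero_or_one]
  simp [hd]

lemma cardFactors_mul_mul_of_prime {p₁ p₂ p₃ : ℕ} (hp₁ : p₁.Prime)
    (hp₂ : p₂.Prime) (hp₃ : p₃.Prime) : Ω (p₁ * p₂ * p₃) = 3 := by
  rw [cardFactors_mul (mul_ne_zero hp₁.ne_zero hp₂.ne_zero) hp₃.ne_zero,
    cardFactors_mul hp₁.ne_zero hp₂.ne_zero, cardFactors_apply_prime hp₁,
    cardFactors_apply_prime hp₂, cardFactors_apply_prime hp₃]

end ArithmeticFunction

namespace Nat

lemma squarefree_mul_mul_of_prime {p₁ p₂ p₃ : ℕ} (hp₁ : p₁.Prime) (hp₂ : p₂.Prime)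
    (hp₃ : p₃.Prime) (h₁₂ : p₁ ≠ p₂) (h₁₃ : p₁ ≠ p₃) (h₂₃ : p₂ ≠ p₃) :
    Squarefree (p₁ * p₂ * p₃) := by
  rw [squarefree_mul_iff, squarefree_mul_iff, coprime_mul_iff_left, coprime_primes hp₁ hp₂,
    coprime_primes hp₁ hp₃, coprime_primes hp₂ hp₃]
  exact ⟨⟨h₁₃, h₂₃⟩, ⟨h₁₂, hp₁.prime.squarefree, hp₂.prime.squarefree⟩, hp₃.prime.squarefree⟩

lemma minFac_mul_mul_of_prime {p₁ p₂ p₃ : ℕ} (hp₁ : p₁.Prime) (hp₂ : p₂.Prime)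
    (hp₃ : p₃.Prime) (h₁₂ : p₁ ≤ p₂) (h₁₃ : p₁ ≤ p₃) : (p₁ * p₂ * p₃).minFac = p₁ := by
  refine le_antisymm (minFac_le_of_dvd hp₁.two_le ⟨p₂ * p₃, by rw [mul_assoc]⟩) ?_
  have hq : (p₁ * p₂ * p₃).minFac.Prime :=
    minFac_prime (mul_ne_one.2 (Or.inr hp₃.ne_one))
  have := minFac_dvd (p₁ * p₂ * p₃)
  simp only [hq.dvd_mul, prime_dvd_prime_iff_eq hq, hp₁, hp₂, hp₃] at this
  omega

lemma totient_div_mul_of_squarefree {n k : ℕ} (hn : Squarefree n) (hk : k.Prime) (hkn : k ∣ n) :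
    φ (n / k) * (k - 1) = φ n := by
  have hnk : n / k * k = n := Nat.div_mul_cancel hkn
  rw [← totient_prime hk, ← totient_mul (coprime_of_squarefree_mul (hnk.symm ▸ hn)), hnk]

lemma totient_div_le_totient_div_of_le {n p k : ℕ} (hn : Squarefree n) (hp : p.Prime)
    (hk : k.Prime) (hpn : p ∣ n) (hkn : k ∣ n) (hpk : p ≤ k) : φ (n / k) ≤ φ (n / p) := by
  refine Nat.le_of_mul_le_mul_right ?_ (Nat.sub_pos_of_lt hk.one_lt)
  calc φ (n / k) * (k - 1) = φ (n / p) * (p - 1) := by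
        rw [totient_div_mul_of_squarefree hn hk hkn, totient_div_mul_of_squarefree hn hp hpn]
    _ ≤ φ (n / p) * (k - 1) := by gcongr

lemma totient_le_totient_div_minFac {n d : ℕ} (hn : Squarefree n) (hd : d ∣ n)
    (hΩ : Ω d + 1 = Ω n) : φ d ≤ φ (n / n.minFac) := by
  have hn0 : n ≠ 0 := hn.ne_zero
  have hk : (n / d).Prime := by
    rw [← ArithmeticFunction.cardFactors_eq_one_iff_prime]
    have := ArithmeticFunction.cardFactors_add_cardFactors_div hn0 hd
    omega
  have hn1 : n ≠ 1 := by
    rintro rfl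
    exact hk.not_dvd_one (div_dvd_of_dvd hd)
  rw [← Nat.div_div_self hd hn0]
  exact totient_div_le_totient_div_of_le hn (minFac_prime hn1) hk (minFac_dvd n)
    (div_dvd_of_dvd hd) (minFac_le_of_dvd hk.two_le (div_dvd_of_dvd hd))

end Nat

section IndepNum

variable {V : Type*} [Fintype V] {Γ : SimpleGraph V}

lemma IsIndepSet.card_le_indepNum {s : Finset V} (hs : IsIndepSet Γ s) :
    s.card ≤ indepNum Γ := by
  classical
  have := Finset.le_sup (f := fun s : Finset V => if IsIndepSet Γ s then s.card else 0)
    (Finset.mem_univ s)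
  rwa [if_pos hs] at this

lemma indepNum_le {k : ℕ} (h : ∀ s : Finset V, IsIndepSet Γ s → s.card ≤ k) :
    indepNum Γ ≤ k := by
  classical
  refine Finset.sup_le fun s _ => ?_
  split_ifs with hs
  exacts [h s hs, k.zero_le]

end IndepNum

section PrimeCoprimeGraph

variable {G : Type*} [LeftCancelMonoid G] [Finite G] {g h : G}

lemma primeCoprimeGraph_adj_iff :
    (primeCoprimeGraph G).Adj g h ↔ g ≠ h ∧ Ω (Nat.gcd (orderOf g) (orderOf h)) ≤ 1 := by
  rw [ArithmeticFunction.cardFactors_le_one_iff (Nat.gcd_pos_of_pos_left _ (orderOf_pos g)).ne']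
  rfl

lemma two_le_cardFactors_gcd_of_not_adj (hgh : g ≠ h)
    (hadj : ¬ (primeCoprimeGraph G).Adj g h) :
    2 ≤ Ω (Nat.gcd (orderOf g) (orderOf h)) := by
  rw [primeCoprimeGraph_adj_iff, not_and, not_le] at hadj
  exact hadj hgh

lemma two_le_cardFactors_orderOf_of_not_adj (hgh : g ≠ h)
    (hadj : ¬ (primeCoprimeGraph G).Adj g h) : 2 ≤ Ω (orderOf g) :=
  (two_le_cardFactors_gcd_of_not_adj hgh hadj).trans <|
    ArithmeticFunction.cardFactors_le_of_dvd (orderOf_pos g).ne' (Nat.gcd_dvd_left _ _)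

lemma orderOf_eq_of_not_adj (hgh : g ≠ h) (hadj : ¬ (primeCoprimeGraph G).Adj g h)
    (hg : Ω (orderOf g) ≤ 2) (hh : Ω (orderOf h) ≤ 2) : orderOf g = orderOf h := by
  have hgcd := two_le_cardFactors_gcd_of_not_adj hgh hadj
  have hg' := ArithmeticFunction.eq_of_dvd_of_cardFactors_le (orderOf_pos g).ne'
    (Nat.gcd_dvd_left _ _) (hg.trans hgcd)
  have hh' := ArithmeticFunction.eq_of_dvd_of_cardFactors_le (orderOf_pos h).ne'
    (Nat.gcd_dvd_right _ _) (hh.trans hgcd)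
  exact hg'.symm.trans hh'

end PrimeCoprimeGraph

section Cyclic

open Finset

variable {G : Type*} [Group G] [Fintype G] [IsCyclic G]

lemma IsIndepSet.card_le_totient_add {s : Finset G} (hs : IsIndepSet (primeCoprimeGraph G) s)
    (hG : Ω (Fintype.card G) = 3) {B : ℕ} (hB : ∀ d, d ∣ Fintype.card G → Ω d = 2 → φ d ≤ B) :
    #s ≤ φ (Fintype.card G) + B := by
  classical
  rcases le_or_gt #s 1 with hs1 | hs1
  · exact hs1.trans ((Nat.totient_pos.2 Fintype.card_pos).trans_le (Nat.le_add_right _ _))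
  have two_le (g) (hg : g ∈ s) : 2 ≤ Ω (orderOf g) :=
    let ⟨h, hh, hhg⟩ := exists_mem_ne hs1 g
    two_le_cardFactors_orderOf_of_not_adj hhg.symm (hs hg hh hhg.symm)
  rw [← card_filter_add_card_filter_not (fun g => orderOf g = Fintype.card G)]
  gcongr ?_ + ?_
  · exact (card_le_card (filter_subset_filter _ (subset_univ s))).trans
      (IsCyclic.card_orderOf_eq_totient dvd_rfl).le
  set T := s.filter fun g => orderOf g ≠ Fintype.card G
  rcases T.eq_empty_or_nonempty with hT | ⟨g₀, hg₀⟩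
  · simp [hT]
  have eq_two (g) (hg : g ∈ T) : Ω (orderOf g) = 2 := by
    rw [mem_filter] at hg
    have := ArithmeticFunction.cardFactors_lt_of_dvd_of_ne Fintype.card_ne_zero
      orderOf_dvd_card hg.2
    have := two_le g hg.1
    omega
  have hT : T ⊆ ({g | orderOf g = orderOf g₀} : Finset G) := fun g hg => by
    rw [mem_filter]
    refine ⟨mem_univ g, ?_⟩
    rcases eq_or_ne g g₀ with rfl | hgg₀
    · rfl
    exact orderOf_eq_of_not_adj hgg₀ (hs (mem_filter.1 hg).1 (mem_filter.1 hg₀).1 hgg₀)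
      (eq_two g hg).le (eq_two g₀ hg₀).le
  calc #T ≤ φ (orderOf g₀) := (card_le_card hT).trans
        (IsCyclic.card_orderOf_eq_totient orderOf_dvd_card).le
    _ ≤ B := hB _ orderOf_dvd_card (eq_two g₀ hg₀)

lemma totient_add_totient_le_indepNum {d : ℕ} (hd : d ∣ Fintype.card G)
    (hdn : d ≠ Fintype.card G) (hd2 : 2 ≤ Ω d) :
    φ (Fintype.card G) + φ d ≤ indepNum (primeCoprimeGraph G) := by
  classical
  set n := Fintype.card G
  set S : Finset G := {g | orderOf g = n ∨ orderOf g = d} with hS_def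
  have dvd_orderOf (g) (hg : g ∈ S) : d ∣ orderOf g := by
    rcases (mem_filter.1 hg).2 with h | h <;> rw [h]
    exact hd
  have hS : IsIndepSet (primeCoprimeGraph G) S := fun g hg h hh hgh hadj => by
    have := ArithmeticFunction.cardFactors_le_of_dvd
      (Nat.gcd_pos_of_pos_left _ (orderOf_pos g)).ne'
      (Nat.dvd_gcd (dvd_orderOf g hg) (dvd_orderOf h hh))
    have := (primeCoprimeGraph_adj_iff.1 hadj).2
    omega
  have hcard : #S = φ n + φ d := by
    rw [hS_def, filter_or,
      card_union_of_disjoint (disjoint_filter.2 fun _ _ h₁ h₂ => hdn (h₂.symm.trans h₁)),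
      IsCyclic.card_orderOf_eq_totient dvd_rfl, IsCyclic.card_orderOf_eq_totient hd]
  exact hcard ▸ hS.card_le_indepNum

theorem indepNum_primeCoprimeGraph_of_squarefree (hsq : Squarefree (Fintype.card G))
    (hΩ : Ω (Fintype.card G) = 3) :
    indepNum (primeCoprimeGraph G) =
      φ (Fintype.card G) + φ (Fintype.card G / (Fintype.card G).minFac) := by
  set n := Fintype.card G
  have hq : n.minFac.Prime := Nat.minFac_prime (by rintro h; simp [h] at hΩ)
  have hΩq : Ω (n / n.minFac) = 2 := by
    have := ArithmeticFunction.cardFactors_add_cardFactors_div hsq.ne_zero (Nat.minFac_dvd n)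
    rw [ArithmeticFunction.cardFactors_apply_prime hq] at this
    omega
  refine le_antisymm (indepNum_le fun s hs => hs.card_le_totient_add hΩ fun d hd hd2 =>
    Nat.totient_le_totient_div_minFac hsq hd (by omega)) ?_
  refine totient_add_totient_le_indepNum (Nat.div_dvd_of_dvd (Nat.minFac_dvd n))
    (fun h => ?_) hΩq.ge
  rw [h, hΩ] at hΩq
  omega

end Cyclic

theorem indepNum_cyclic_pqr (n p₁ p₂ p₃ : ℕ) [NeZero n]
    (hp₁ : p₁.Prime) (hp₂ : p₂.Prime) (hp₃ : p₃.Prime)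
    (h₁₂ : p₁ < p₂) (h₂₃ : p₂ < p₃) (hn : n = p₁ * p₂ * p₃) :
    indepNum (primeCoprimeGraph (Multiplicative (ZMod n))) =
      p₁ * (p₂ - 1) * (p₃ - 1) := by
  subst hn
  have h₁₃ := h₁₂.trans h₂₃
  have hcard : Fintype.card (Multiplicative (ZMod (p₁ * p₂ * p₃))) = p₁ * p₂ * p₃ := by simp
  have hsq := Nat.squarefree_mul_mul_of_prime hp₁ hp₂ hp₃ h₁₂.ne h₁₃.ne h₂₃.ne
  have hΩ := ArithmeticFunction.cardFactors_mul_mul_of_prime hp₁ hp₂ hp₃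
  have hφ₂₃ : φ (p₂ * p₃) = (p₂ - 1) * (p₃ - 1) := by
    rw [Nat.totient_mul ((Nat.coprime_primes hp₂ hp₃).2 h₂₃.ne), Nat.totient_prime hp₂,
      Nat.totient_prime hp₃]
  have hφ : φ (p₁ * (p₂ * p₃)) = (p₁ - 1) * φ (p₂ * p₃) := by
    rw [Nat.totient_mul (Nat.Coprime.mul_right ((Nat.coprime_primes hp₁ hp₂).2 h₁₂.ne)
      ((Nat.coprime_primes hp₁ hp₃).2 h₁₃.ne)), Nat.totient_prime hp₁]
  rw [← hcard] at hsq hΩ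
  rw [indepNum_primeCoprimeGraph_of_squarefree hsq hΩ, hcard,
    Nat.minFac_mul_mul_of_prime hp₁ hp₂ hp₃ h₁₂.le h₁₃.le, mul_assoc,
    Nat.mul_div_cancel_left _ hp₁.pos, hφ, hφ₂₃, Nat.sub_one_mul, mul_assoc]
  exact Nat.sub_add_cancel (Nat.le_mul_of_pos_left _ hp₁.pos)
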